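/- Let L/K be a finite Galois extension of odd degree n = 2m+1 > 1 with Galois group G whose non-identity elements are grouped into inverse pairs {σ_i, σ_i⁻¹}, 1 ≤ i ≤ m. Setting A^i = {f_{b,σ_i} : b ∈ L}, there is a direct sum decomposition Alt(L) = A^1 ⊕ ⋯ ⊕ A^m, where each subspace A^i has K-dimension n; moreover, if σ_i has order 2r_i+1, then every nonzero element of A^i has rank n − n/(2r_i+1). -/

import Mathlib

/-!
Write `G = Gal(L/K)`. By nondegeneracy of the trace form and Dedekind's independence of
characters, `c ↦ ((x, y) ↦ ∑_τ Tr(c τ · x · τ y))` is injective on `G → L`, and `f_{b,σ}` is its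
value at the function equal to `b` at `σ`, to `-σ⁻¹ b` at `σ⁻¹` and to `0` elsewhere. As the
`σᵢ, σᵢ⁻¹` are distinct, `d ↦ ∑ᵢ f_{dᵢ,σᵢ}` is injective on `Lᵐ`: the `Aⁱ` are independent of
dimension `n`, and their sum has dimension `mn = n(n-1)/2`, the largest possible dimension of a
space of alternating forms, so it is `Alt(L)`.

The radical of `f_{b,τ}` is `{x | b x = τ b · τ² x}`. If `τ` has order `2r+1`, then
`x₀ = τ b · τ³ b ⋯ τ^(2r-1) b` is a nonzero solution, and `x` is a solution iff `x / x₀` is fixed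
by `τ²`, that is, by `τ`. So the radical is `x₀ · L^⟨τ⟩`, of dimension `n / (2r+1)`.
-/

variable {K L : Type*} [Field K] [Field L] [Algebra K L]

/-- The alternating bilinear form `f_{b,σ}(x,y) = Tr^L_K (b * (x * σ y - σ x * y))`,
where `Tr^L_K` is the trace form of the extension `L/K`. -/
noncomputable def galoisAltForm (b : L) (σ : L ≃ₐ[K] L) : (L →ₗ[K] L →ₗ[K] K) :=
  LinearMap.mk₂ K (fun x y => Algebra.trace K L (b * (x * σ y - σ x * y)))
    (fun x x' y => by
      try dsimp only
      rw [show b * ((x + x') * σ y - σ (x + x') * y)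
            = b * (x * σ y - σ x * y) + b * (x' * σ y - σ x' * y) by
          rw [map_add σ]; ring, map_add])
    (fun a x y => by
      try dsimp only
      rw [show b * ((a • x) * σ y - σ (a • x) * y)
            = a • (b * (x * σ y - σ x * y)) by
          rw [map_smul σ]
          simp only [smul_sub, smul_mul_assoc, mul_smul_comm, mul_sub], map_smul])
    (fun x y y' => by
      try dsimp only
      rw [show b * (x * σ (y + y') - σ x * (y + y'))
            = b * (x * σ y - σ x * y) + b * (x * σ y' - σ x * y') by
          rw [map_add σ]; ring, map_add])
    (fun a x y => by
      try dsimp only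
      rw [show b * (x * σ (a • y) - σ x * (a • y))
            = a • (b * (x * σ y - σ x * y)) by
          rw [map_smul σ]
          simp only [smul_sub, smul_mul_assoc, mul_smul_comm, mul_sub], map_smul])

/-- `b ↦ f_{b,σ}` as a `K`-linear map. -/
noncomputable def galoisAltFormL (σ : L ≃ₐ[K] L) : L →ₗ[K] (L →ₗ[K] L →ₗ[K] K) where
  toFun b := galoisAltForm b σ
  map_add' b b' := by
    ext x y
    simp only [galoisAltForm, LinearMap.mk₂_apply, LinearMap.add_apply]
    rw [← map_add, add_mul]
  map_smul' a b := by
    ext x y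
    simp only [galoisAltForm, LinearMap.mk₂_apply, LinearMap.smul_apply, RingHom.id_apply]
    rw [← map_smul, smul_mul_assoc]

/-- The rank of a bilinear form on `L`: `dim_K L` minus the dimension of its radical
`{x : L | ∀ y, f x y = 0}` (which is the kernel of `f` viewed as a map `L →ₗ[K] (L →ₗ[K] K)`). -/
noncomputable def formRank (f : (L →ₗ[K] L →ₗ[K] K)) : ℕ :=
  Module.finrank K L - Module.finrank K (LinearMap.ker f)

/-- The space `Alt(L)` of all alternating `K`-bilinear forms on `L`. -/
def altSubspace (K L : Type*) [Field K] [Field L] [Algebra K L] :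
    Submodule K (L →ₗ[K] L →ₗ[K] K) where
  carrier := {f | ∀ x : L, f x x = 0}
  add_mem' hf hg x := by simp [hf x, hg x]
  zero_mem' x := rfl
  smul_mem' a f hf x := by simp [hf x]

open Module LinearMap

section FamilyOfLinearMaps

variable {R M N ι : Type*} [CommSemiring R] [AddCommMonoid M] [Module R M]
  [AddCommMonoid N] [Module R N] (F : ι → M →ₗ[R] N)

theorem iSup_range_eq_range_lsum : ⨆ i, range (F i) = range (Finsupp.lsum R F) := by
  simp_rw [← Finsupp.lsum_comp_lsingle R F, range_comp, ← Submodule.map_iSup,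
    Finsupp.iSup_lsingle_range, ← range_eq_map]

theorem iSupIndep_range_of_lsum_injective (h : Function.Injective (Finsupp.lsum R F)) :
    iSupIndep fun i => range (F i) := by
  convert (Finsupp.lsum R F).iSupIndep_map h (iSupIndep_range_lsingle ι R M) using 2 with i
  rw [← range_comp, Finsupp.lsum_comp_lsingle]

theorem injective_of_lsum_injective (h : Function.Injective (Finsupp.lsum R F)) (i : ι) :
    Function.Injective (F i) := fun x y hxy =>
  Finsupp.single_injective i (h (by simpa only [Finsupp.lsum_single] using hxy))

end FamilyOfLinearMaps

theorem LinearMap.IsAlt.ext_basis_of_lt {V ι : Type*} [AddCommGroup V] [Module K V] [LinearOrder ι]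
    (v : Basis ι K V) {f g : V →ₗ[K] V →ₗ[K] K} (hf : f.IsAlt) (hg : g.IsAlt)
    (h : ∀ i j, i < j → f (v i) (v j) = g (v i) (v j)) : f = g :=
  v.ext fun i => v.ext fun j => by
    rcases lt_trichotomy i j with hij | rfl | hji
    · exact h i j hij
    · exact (hf (v i)).trans (hg (v i)).symm
    · rw [← hf.neg, ← hg.neg, h j i hji]

/-- The entries `f (vᵢ, vⱼ)`, `i < j`, determine an alternating form, so alternating forms make up
a space of dimension at most `(dim V).choose 2`. -/
theorem Submodule.eq_of_le_of_choose_two_le_finrank {V : Type*} [AddCommGroup V] [Module K V]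
    [FiniteDimensional K V] {U W : Submodule K (V →ₗ[K] V →ₗ[K] K)} (hUW : U ≤ W)
    (hW : ∀ f ∈ W, f.IsAlt) (hU : (finrank K V).choose 2 ≤ finrank K U) : U = W := by
  classical
  set N := finrank K V
  let v := Module.finBasis K V
  let entries : (V →ₗ[K] V →ₗ[K] K) →ₗ[K] ({p : Fin N × Fin N // p.1 < p.2} → K) :=
    { toFun f p := f (v p.1.1) (v p.1.2)
      map_add' _ _ := rfl
      map_smul' _ _ := rfl }
  have hinj : ∀ f ∈ W, ∀ g ∈ W, entries f = entries g → f = g := fun f hf g hg h =>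
    (hW f hf).ext_basis_of_lt v (hW g hg) fun i j hij => congrFun h ⟨(i, j), hij⟩
  have hfinrank : finrank K ({p : Fin N × Fin N // p.1 < p.2} → K) = N.choose 2 := by
    rw [finrank_fintype_fun_eq_card, Fintype.card_subtype, Fintype.card_product_filter_lt,
      Fintype.card_fin]
  have htop : range (entries ∘ₗ U.subtype) = ⊤ := by
    have hUinj : Function.Injective (entries ∘ₗ U.subtype) := fun f g h =>
      Subtype.ext (hinj f (hUW f.2) g (hUW g.2) h)
    refine Submodule.eq_top_of_finrank_eq (le_antisymm (Submodule.finrank_le _) ?_)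
    rw [finrank_range_of_inj hUinj, hfinrank]
    exact hU
  refine le_antisymm hUW fun f hf => ?_
  have hf_mem : entries f ∈ range (entries ∘ₗ U.subtype) := htop ▸ Submodule.mem_top
  obtain ⟨u, hu⟩ := mem_range.mp hf_mem
  rw [← hinj u (hUW u.2) f hf hu]
  exact u.2

theorem smul_eq_self_of_sq_smul_eq_self {G α : Type*} [Group G] [MulAction G α] {g : G}
    (hg : Odd (orderOf g)) {a : α} (h : g ^ 2 • a = a) : g • a = a := by
  obtain ⟨r, hr⟩ := hg
  have hgen : (g ^ 2) ^ (r + 1) = g := by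
    rw [← pow_mul, show 2 * (r + 1) = orderOf g + 1 by omega, pow_succ, pow_orderOf_eq_one,
      one_mul]
  rw [← MulAction.mem_stabilizer_iff, ← hgen]
  exact pow_mem (MulAction.mem_stabilizer_iff.mpr h) _

theorem galoisAltForm_apply_eq_trace_add_trace (b : L) (σ : L ≃ₐ[K] L) (x y : L) :
    galoisAltForm b σ x y =
      Algebra.trace K L (b * x * σ y) + Algebra.trace K L (-σ⁻¹ b * x * σ⁻¹ y) := by
  have h : -σ⁻¹ b * x * σ⁻¹ y = σ⁻¹ (-(b * σ x * y)) := by simp [AlgEquiv.aut_inv]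
  rw [h, Algebra.trace_eq_of_algEquiv, map_neg, ← sub_eq_add_neg, ← map_sub]
  show Algebra.trace K L (b * (x * σ y - σ x * y)) = _
  congr 1
  ring

section AutTraceForm

variable {ι : Type*} [Fintype ι]

noncomputable def autTraceForm (g : ι → L ≃ₐ[K] L) : (ι → L) →ₗ[K] L →ₗ[K] L →ₗ[K] K :=
  ∑ s, ((LinearMap.mul K L).compr₂ ((Algebra.traceForm K L).compl₂ (g s).toLinearMap)) ∘ₗ
    LinearMap.proj s

theorem autTraceForm_apply (g : ι → L ≃ₐ[K] L) (c : ι → L) (x y : L) :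
    autTraceForm g c x y = ∑ s, Algebra.trace K L (c s * x * g s y) := by
  simp [autTraceForm, LinearMap.sum_apply]

theorem autTraceForm_injective [FiniteDimensional K L] [Algebra.IsSeparable K L]
    {g : ι → L ≃ₐ[K] L} (hg : Function.Injective g) : Function.Injective (autTraceForm g) := by
  rw [injective_iff_map_eq_zero]
  intro c hc
  have hsum : ∀ y, ∑ s, c s * g s y = 0 := fun y =>
    (traceForm_nondegenerate K L).1 _ fun x => by
      have h : ∑ s, Algebra.trace K L (c s * x * g s y) = 0 := by
        rw [← autTraceForm_apply, hc]
        rfl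
      rw [Algebra.traceForm_apply, Finset.sum_mul, map_sum, ← h]
      exact Finset.sum_congr rfl fun s _ => by rw [mul_right_comm]
  have hindep : LinearIndependent L fun s => ((g s : L →* L) : L → L) :=
    (linearIndependent_monoidHom L L).comp _ fun s t hst =>
      hg (AlgEquiv.ext fun z => DFunLike.congr_fun hst z)
  exact funext (Fintype.linearIndependent_iff.mp hindep c (funext fun y => by simpa using hsum y))

theorem autTraceForm_sumElim_eq_sum_galoisAltFormL (σ : ι → L ≃ₐ[K] L) (d : ι → L) :
    autTraceForm (Sum.elim σ fun i => (σ i)⁻¹) (Sum.elim d fun i => -(σ i)⁻¹ (d i)) =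
      ∑ i, galoisAltFormL (σ i) (d i) := by
  ext x y
  simp only [autTraceForm_apply, Fintype.sum_sum_type, Sum.elim_inl, Sum.elim_inr,
    ← Finset.sum_add_distrib, LinearMap.sum_apply]
  exact Finset.sum_congr rfl fun i _ => (galoisAltForm_apply_eq_trace_add_trace _ _ _ _).symm

end AutTraceForm

theorem galoisAltForm_apply_eq_trace_mul (b : L) (τ : L ≃ₐ[K] L) (x y : L) :
    galoisAltForm b τ x y = Algebra.trace K L ((τ.symm (b * x) - b * τ x) * y) := by
  have h : b * x * τ y = τ (τ.symm (b * x) * y) := by simp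
  rw [sub_mul, map_sub, ← Algebra.trace_eq_of_algEquiv τ, ← h, ← map_sub]
  show Algebra.trace K L (b * (x * τ y - τ x * y)) = _
  congr 1
  ring

theorem mem_ker_galoisAltForm_iff [FiniteDimensional K L] [Algebra.IsSeparable K L]
    {b x : L} {τ : L ≃ₐ[K] L} : x ∈ ker (galoisAltForm b τ) ↔ b * x = τ b * τ (τ x) := by
  have hsolve : τ.symm (b * x) - b * τ x = 0 ↔ b * x = τ b * τ (τ x) := by
    rw [sub_eq_zero, AlgEquiv.symm_apply_eq, map_mul]
  rw [← hsolve, mem_ker, LinearMap.ext_iff]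
  simp only [galoisAltForm_apply_eq_trace_mul, LinearMap.zero_apply]
  exact ⟨(traceForm_nondegenerate K L).1 _, fun h y => by rw [h, zero_mul, map_zero]⟩

theorem mem_fixedField_zpowers_iff {τ : L ≃ₐ[K] L} {t : L} :
    t ∈ IntermediateField.fixedField (Subgroup.zpowers τ) ↔ τ t = t := by
  rw [IntermediateField.mem_fixedField_iff]
  refine ⟨fun h => h τ (Subgroup.mem_zpowers τ), fun h f hf => ?_⟩
  have hstab : Subgroup.zpowers τ ≤ MulAction.stabilizer (L ≃ₐ[K] L) t :=
    Subgroup.zpowers_le.mpr (MulAction.mem_stabilizer_iff.mpr h)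
  exact MulAction.mem_stabilizer_iff.mp (hstab hf)

section OddOrder

variable {τ : L ≃ₐ[K] L} {r : ℕ}

noncomputable def oddPowProd (τ : L ≃ₐ[K] L) (r : ℕ) (b : L) : L :=
  ∏ t ∈ Finset.range r, (τ ^ (2 * t + 1)) b

theorem oddPowProd_ne_zero {b : L} (hb : b ≠ 0) : oddPowProd τ r b ≠ 0 :=
  Finset.prod_ne_zero_iff.mpr fun _ _ => (map_ne_zero _).mpr hb

theorem mul_oddPowProd_eq (hτ : orderOf τ = 2 * r + 1) (b : L) :
    b * oddPowProd τ r b = τ b * τ (τ (oddPowProd τ r b)) := by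
  have hlast : (τ ^ (2 * r + 1)) b = b := by
    rw [← hτ, pow_orderOf_eq_one, AlgEquiv.one_apply]
  have hextend : b * oddPowProd τ r b = ∏ t ∈ Finset.range (r + 1), (τ ^ (2 * t + 1)) b := by
    rw [Finset.prod_range_succ, hlast, mul_comm, oddPowProd]
  rw [hextend, Finset.prod_range_succ', oddPowProd, map_prod, map_prod, mul_comm]
  congr 1
  exact Finset.prod_congr rfl fun t _ => by rw [mul_add, pow_succ', pow_succ']; rfl

theorem ker_galoisAltForm_eq_range [FiniteDimensional K L] [Algebra.IsSeparable K L]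
    (hτ : orderOf τ = 2 * r + 1) {b : L} (hb : b ≠ 0) :
    ker (galoisAltForm b τ) = range (mulLeft K (oddPowProd τ r b) ∘ₗ
      (IntermediateField.fixedField (Subgroup.zpowers τ)).val.toLinearMap) := by
  set x₀ := oddPowProd τ r b
  have hx₀ : x₀ ≠ 0 := oddPowProd_ne_zero hb
  have hτb : τ b ≠ 0 := (map_ne_zero _).mpr hb
  have hsol : b * x₀ = τ b * τ (τ x₀) := mul_oddPowProd_eq hτ b
  ext x
  simp only [mem_ker_galoisAltForm_iff, mem_range, comp_apply, mulLeft_apply,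
    AlgHom.toLinearMap_apply, IntermediateField.val_mk, Subtype.exists, mem_fixedField_zpowers_iff]
  constructor
  · intro hx
    have hfix : τ (τ (x₀⁻¹ * x)) = x₀⁻¹ * x := by
      have e1 : τ (τ x) = b * x / τ b := by rw [hx]; field_simp
      have e2 : τ (τ x₀) = b * x₀ / τ b := by rw [hsol]; field_simp
      rw [map_mul, map_mul, map_inv₀, map_inv₀, e1, e2]
      field_simp
    have hodd : Odd (orderOf τ) := hτ ▸ odd_two_mul_add_one r
    refine ⟨x₀⁻¹ * x, smul_eq_self_of_sq_smul_eq_self hodd hfix, ?_⟩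
    field_simp
  · rintro ⟨t, ht, rfl⟩
    rw [map_mul, map_mul, ht, ht, ← mul_assoc, ← mul_assoc, ← hsol]

theorem finrank_ker_galoisAltForm [FiniteDimensional K L] [Algebra.IsSeparable K L]
    (hτ : orderOf τ = 2 * r + 1) {b : L} (hb : b ≠ 0) :
    finrank K (ker (galoisAltForm b τ)) = finrank K L / (2 * r + 1) := by
  set F := IntermediateField.fixedField (Subgroup.zpowers τ)
  have hinj : Function.Injective (mulLeft K (oddPowProd τ r b) ∘ₗ F.val.toLinearMap) :=
    fun s t hst => Subtype.val_injective (mul_left_cancel₀ (oddPowProd_ne_zero hb) hst)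
  have htower : finrank K F * (2 * r + 1) = finrank K L := by
    rw [← finrank_mul_finrank K F L, IntermediateField.finrank_fixedField_eq_card,
      Nat.card_zpowers, hτ]
  rw [ker_galoisAltForm_eq_range hτ hb, finrank_range_of_inj hinj, ← htower,
    Nat.mul_div_cancel _ (Nat.succ_pos _)]

end OddOrder

theorem galoisAltForm_mem_altSubspace (b : L) (σ : L ≃ₐ[K] L) :
    galoisAltForm b σ ∈ altSubspace K L := fun x => by
  show Algebra.trace K L (b * (x * σ x - σ x * x)) = 0
  rw [mul_comm x, sub_self, mul_zero, map_zero]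

theorem lsum_galoisAltFormL_injective [FiniteDimensional K L] [Algebra.IsSeparable K L]
    {ι : Type*} [Fintype ι] {σ : ι → L ≃ₐ[K] L}
    (hσ : Function.Injective (Sum.elim σ fun i => (σ i)⁻¹)) :
    Function.Injective (Finsupp.lsum K fun i => galoisAltFormL (σ i)) := by
  rw [injective_iff_map_eq_zero]
  intro d hd
  have hzero : autTraceForm (Sum.elim σ fun i => (σ i)⁻¹) (Sum.elim d fun i => -(σ i)⁻¹ (d i)) =
      autTraceForm (Sum.elim σ fun i => (σ i)⁻¹) 0 := by
    rw [autTraceForm_sumElim_eq_sum_galoisAltFormL, map_zero, ← hd, Finsupp.lsum_apply,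
      Finsupp.sum_fintype _ _ fun i => map_zero _]
  ext i
  exact congrFun (autTraceForm_injective hσ hzero) (Sum.inl i)

theorem statement9_general [FiniteDimensional K L] [IsGalois K L]
    (n m : ℕ) (hn : Module.finrank K L = n) (hnm : n = 2 * m + 1)
    (σ : Fin m → (L ≃ₐ[K] L))
    (henum : Function.Bijective
      (Sum.elim (fun _ : Unit => (1 : L ≃ₐ[K] L))
        (Sum.elim σ fun i => (σ i)⁻¹) : Unit ⊕ (Fin m ⊕ Fin m) → (L ≃ₐ[K] L))) :
    iSupIndep (fun i => LinearMap.range (galoisAltFormL (σ i))) ∧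
    (⨆ i, LinearMap.range (galoisAltFormL (σ i))) = altSubspace K L ∧
    (∀ i, Module.finrank K (LinearMap.range (galoisAltFormL (σ i))) = n) ∧
    (∀ i (r : ℕ), orderOf (σ i) = 2 * r + 1 →
      ∀ f ∈ LinearMap.range (galoisAltFormL (σ i)), f ≠ 0 →
        formRank f = n - n / (2 * r + 1)) := by
  have hΨ : Function.Injective (Finsupp.lsum K fun i => galoisAltFormL (σ i)) :=
    lsum_galoisAltFormL_injective (henum.1.comp Sum.inr_injective)
  have hsup : finrank K ↥(⨆ i, range (galoisAltFormL (σ i))) = m * n := by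
    rw [iSup_range_eq_range_lsum, finrank_range_of_inj hΨ,
      (Finsupp.linearEquivFunOnFinite K L (Fin m)).finrank_eq, finrank_pi_fintype,
      Finset.sum_const, Finset.card_univ, Fintype.card_fin, smul_eq_mul, hn]
  have hchoose : n.choose 2 = m * n := by
    rw [Nat.choose_two_right, hnm, Nat.add_sub_cancel]
    exact Nat.div_eq_of_eq_mul_left two_pos (by ring)
  refine ⟨iSupIndep_range_of_lsum_injective _ hΨ, ?_, fun i => ?_, ?_⟩
  · refine Submodule.eq_of_le_of_choose_two_le_finrank (iSup_le fun i => ?_) (fun f hf => hf)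
      (by rw [hn, hsup, hchoose])
    rintro _ ⟨b, rfl⟩
    exact galoisAltForm_mem_altSubspace b (σ i)
  · rw [finrank_range_of_inj (injective_of_lsum_injective _ hΨ i), hn]
  · rintro i r hr _ ⟨b, rfl⟩ hf0
    have hb : b ≠ 0 := by
      rintro rfl
      exact hf0 (map_zero _)
    show finrank K L - finrank K (ker (galoisAltForm b (σ i))) = _
    rw [finrank_ker_galoisAltForm hr hb, hn]

/-- for `n = 2m+1` odd, with `G \ {1}` partitioned into inverse pairs
`{σᵢ, σᵢ⁻¹}`, the subspaces `Aⁱ = {f_{b,σᵢ} : b ∈ L}` give a direct sum decomposition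
`Alt(L) = A¹ ⊕ ⋯ ⊕ Aᵐ` with each `Aⁱ` of dimension `n`; and if `σᵢ` has order `2rᵢ+1`
then every nonzero element of `Aⁱ` has rank `n − n/(2rᵢ+1)`. -/
theorem statement9 [FiniteDimensional K L] [IsGalois K L]
    (n m : ℕ) (hn : Module.finrank K L = n) (hnm : n = 2 * m + 1) (hm : 1 ≤ m)
    (σ : Fin m → (L ≃ₐ[K] L))
    (henum : Function.Bijective
      (Sum.elim (fun _ : Unit => (1 : L ≃ₐ[K] L))
        (Sum.elim σ fun i => (σ i)⁻¹) : Unit ⊕ (Fin m ⊕ Fin m) → (L ≃ₐ[K] L))) :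
    iSupIndep (fun i => LinearMap.range (galoisAltFormL (σ i))) ∧
    (⨆ i, LinearMap.range (galoisAltFormL (σ i))) = altSubspace K L ∧
    (∀ i, Module.finrank K (LinearMap.range (galoisAltFormL (σ i))) = n) ∧
    (∀ i (r : ℕ), orderOf (σ i) = 2 * r + 1 →
      ∀ f ∈ LinearMap.range (galoisAltFormL (σ i)), f ≠ 0 →
        formRank f = n - n / (2 * r + 1)) :=
  statement9_general n m hn hnm σ henum
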